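/- Let 𝔤 be the Lie algebra 𝔯₃ with inner product making an orthonormal basis {x₁,x₂,x₃} satisfy [x₁,x₂] = x₂ + λ x₃, [x₁,x₃] = x₃ for some λ > 0. Then the matrix of the Ricci operator with respect to {x₁,x₂,x₃} is -[[2+λ²/2, 0, 0],[0, 2+λ²/2, λ],[0, λ, 2-λ²/2]]. -/
import Mathlib


open Matrix

noncomputable section

/-- standard basis of ℝ³ -/
def e (i : Fin 3) : Fin 3 → ℝ := Pi.single i 1

/-- standard inner product on ℝ³ (the basis `e` is orthonormal) -/
def dotp (x y : Fin 3 → ℝ) : ℝ := ∑ i, x i * y i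

/-- Levi-Civita connection of the metric Lie algebra (ℝ³, br, dotp), via
    2⟨∇_X Y, Z⟩ = ⟨[Z,X],Y⟩ + ⟨X,[Z,Y]⟩ + ⟨[X,Y],Z⟩. -/
def nabla (br : (Fin 3 → ℝ) → (Fin 3 → ℝ) → (Fin 3 → ℝ)) (X Y : Fin 3 → ℝ) :
    Fin 3 → ℝ :=
  fun k => (1/2) * (dotp (br (e k) X) Y + dotp X (br (e k) Y) + dotp (br X Y) (e k))

/-- Riemannian curvature R(X,Y)Z = ∇_X∇_Y Z - ∇_Y∇_X Z - ∇_{[X,Y]}Z. -/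
def curv (br : (Fin 3 → ℝ) → (Fin 3 → ℝ) → (Fin 3 → ℝ)) (X Y Z : Fin 3 → ℝ) :
    Fin 3 → ℝ :=
  nabla br X (nabla br Y Z) - nabla br Y (nabla br X Z) - nabla br (br X Y) Z

/-- Ricci operator Ric(X) = Σᵢ R(X,eᵢ)eᵢ. -/
def ric (br : (Fin 3 → ℝ) → (Fin 3 → ℝ) → (Fin 3 → ℝ)) (X : Fin 3 → ℝ) :
    Fin 3 → ℝ :=
  ∑ i, curv br X (e i) (e i)

/-- The bracket with [x₁,x₂] = x₂ + λ x₃, [x₁,x₃] = x₃, [x₂,x₃] = 0. -/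
def brR3 (l : ℝ) (x y : Fin 3 → ℝ) : Fin 3 → ℝ :=
  ![0,
    x 0 * y 1 - x 1 * y 0,
    l * (x 0 * y 1 - x 1 * y 0) + (x 0 * y 2 - x 2 * y 0)]

set_option maxHeartbeats 4000000 in
/-- The Ricci operator of the metric on 𝔯₃ with parameter λ > 0. -/
theorem ricci_r3 (l : ℝ) (hl : 0 < l) :
    ∀ i : Fin 3, ric (brR3 l) (e i) =
      Matrix.mulVec
        (-(!![2 + l^2/2, 0, 0; 0, 2 + l^2/2, l; 0, l, 2 - l^2/2])) (e i) := by
  intro i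
  funext k
  fin_cases i <;> fin_cases k <;>
    simp [ric, curv, nabla, dotp, brR3, e, Fin.sum_univ_succ, Pi.single_apply,
      Matrix.mulVec, dotProduct] <;> ring
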